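/- arXiv:1304.3139 — 2 statements merged into one kernel-verified Lean document; each statement's English description precedes it below -/
import Mathlib

section
/- Let G = (V,E) be a finite graph, let y_1,...,y_n ≥ 0 be nonnegative reals assigned to the vertices, not all zero, and let α = (∑_i max_{j∼i} |y_j − y_i|) / (∑_i y_i). Then there exists a nonempty set S contained in the support {i : y_i > 0} whose vertex expansion satisfies |N(S)|/|S| ≤ α. -/
/-!
Layer-cake argument. For `t ≥ 0` let `S_t = {i | t < y i}`; then `∑ i, y i = ∫₀^∞ |S_t| dt`, and a
vertex `w` lies in `N(S_t)` only for `t ∈ [y w, y w + max_{j∼w} |y j - y w|)`, so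
`∫₀^∞ |N(S_t)| dt ≤ ∑ w, max_{j∼w} |y j - y w|`. If `r` is the least expansion ratio of a nonempty
subset of the support, every `S_t` with `t ≥ 0` satisfies `r |S_t| ≤ |N(S_t)|`; integrating gives
`r ∑ y ≤ ∑ max |y j - y i|`, i.e. `r ≤ α`.
-/

/-- Supremum of `f` over a finite set, taken to be `0` when the set is empty. -/
noncomputable def supOrZero {ι : Type*} (s : Finset ι) (f : ι → ℝ) : ℝ :=
  if h : s.Nonempty then s.sup' h f else 0

open Finset MeasureTheory
open scoped ENNReal

theorem le_supOrZero {ι : Type*} {s : Finset ι} {i : ι} (f : ι → ℝ) (hi : i ∈ s) :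
    f i ≤ supOrZero s f := by
  rw [supOrZero, dif_pos ⟨i, hi⟩]
  exact le_sup' f hi

theorem supOrZero_nonneg {ι : Type*} {s : Finset ι} {f : ι → ℝ} (hf : ∀ i ∈ s, 0 ≤ f i) :
    0 ≤ supOrZero s f := by
  rw [supOrZero]
  split_ifs with hs
  · obtain ⟨i, hi⟩ := hs
    exact (hf i hi).trans (le_sup' f hi)
  · exact le_rfl

theorem lintegral_card_filter {α ι : Type*} [MeasurableSpace α] [Fintype ι] (μ : Measure α)
    (p : ι → α → Prop) [∀ i a, Decidable (p i a)] (hp : ∀ i, MeasurableSet {a | p i a}) :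
    ∫⁻ a, (#{i | p i a} : ℝ≥0∞) ∂μ = ∑ i, μ {a | p i a} := by
  have hcard : ∀ a, (#{i | p i a} : ℝ≥0∞) = ∑ i, {a | p i a}.indicator 1 a := fun a => by
    rw [Finset.card_filter]
    push_cast
    simp only [Set.indicator_apply, Set.mem_ofPred_eq, Pi.one_apply]
  simp_rw [hcard]
  rw [lintegral_finsetSum _ fun i _ => measurable_one.indicator (hp i)]
  exact Finset.sum_congr rfl fun i _ => lintegral_indicator_one (hp i)

variable {V : Type*} [Fintype V]

noncomputable def superlevelSet (y : V → ℝ) (t : ℝ) : Finset V := {i | t < y i}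

def vertexBoundary [DecidableEq V] (G : SimpleGraph V) [DecidableRel G.Adj] (S : Finset V) :
    Finset V :=
  {w | w ∉ S ∧ ∃ u ∈ S, G.Adj u w}

noncomputable def maxNeighborGap (G : SimpleGraph V) [DecidableRel G.Adj] (y : V → ℝ) (i : V) : ℝ :=
  supOrZero (G.neighborFinset i) fun j => |y j - y i|

variable (G : SimpleGraph V) [DecidableRel G.Adj] (y : V → ℝ)

theorem maxNeighborGap_nonneg (i : V) : 0 ≤ maxNeighborGap G y i :=
  supOrZero_nonneg fun _ _ => abs_nonneg _

theorem lintegral_card_superlevelSet (hy : ∀ i, 0 ≤ y i) :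
    ∫⁻ t in Set.Ici 0, (#(superlevelSet y t) : ℝ≥0∞) = ENNReal.ofReal (∑ i, y i) := by
  rw [ENNReal.ofReal_sum_of_nonneg fun i _ => hy i]
  refine (lintegral_card_filter _ (fun i t => t < y i) fun i => measurableSet_Iio).trans ?_
  refine Finset.sum_congr rfl fun i _ => ?_
  change volume.restrict _ (Set.Iio (y i)) = _
  rw [Measure.restrict_apply measurableSet_Iio, Set.Iio_inter_Ici, Real.volume_Ico, sub_zero]

variable [DecidableEq V]

theorem mem_Ico_of_mem_vertexBoundary_superlevelSet {t : ℝ} {w : V}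
    (hw : w ∈ vertexBoundary G (superlevelSet y t)) :
    t ∈ Set.Ico (y w) (y w + maxNeighborGap G y w) := by
  simp only [vertexBoundary, superlevelSet, mem_filter, mem_univ, true_and, not_lt] at hw
  obtain ⟨hwt, u, htu, hadj⟩ := hw
  have hgap : |y u - y w| ≤ maxNeighborGap G y w :=
    le_supOrZero (fun j => |y j - y w|) ((G.mem_neighborFinset w u).2 hadj.symm)
  exact ⟨hwt, by linarith [le_abs_self (y u - y w)]⟩

theorem lintegral_card_vertexBoundary_superlevelSet_le :
    ∫⁻ t, (#(vertexBoundary G (superlevelSet y t)) : ℝ≥0∞)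
      ≤ ENNReal.ofReal (∑ i, maxNeighborGap G y i) := by
  rw [ENNReal.ofReal_sum_of_nonneg fun i _ => maxNeighborGap_nonneg G y i]
  calc ∫⁻ t, (#(vertexBoundary G (superlevelSet y t)) : ℝ≥0∞)
      ≤ ∫⁻ t, (#{w | t ∈ Set.Ico (y w) (y w + maxNeighborGap G y w)} : ℝ≥0∞) :=
        lintegral_mono fun t => by
          gcongr
          intro w hw
          simpa using mem_Ico_of_mem_vertexBoundary_superlevelSet G y hw
    _ = ∑ w, ENNReal.ofReal (maxNeighborGap G y w) := by
        rw [lintegral_card_filter _ (fun w t => t ∈ Set.Ico (y w) (y w + maxNeighborGap G y w))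
          fun w => measurableSet_Ico]
        simp only [Set.ofPred_mem_eq, Real.volume_Ico, add_sub_cancel_left]

theorem mul_sum_le_sum_maxNeighborGap (hy : ∀ i, 0 ≤ y i) {r : ℝ} (hr : 0 ≤ r)
    (h : ∀ t, 0 ≤ t →
      r * #(superlevelSet y t) ≤ #(vertexBoundary G (superlevelSet y t))) :
    r * ∑ i, y i ≤ ∑ i, maxNeighborGap G y i := by
  refine (ENNReal.ofReal_le_ofReal_iff
    (sum_nonneg fun i _ => maxNeighborGap_nonneg G y i)).1 ?_
  calc ENNReal.ofReal (r * ∑ i, y i)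
      = ENNReal.ofReal r * ∫⁻ t in Set.Ici 0, (#(superlevelSet y t) : ℝ≥0∞) := by
        rw [ENNReal.ofReal_mul hr, lintegral_card_superlevelSet y hy]
    _ = ∫⁻ t in Set.Ici 0, ENNReal.ofReal (r * #(superlevelSet y t)) := by
        rw [← lintegral_const_mul' _ _ ENNReal.ofReal_ne_top]
        simp_rw [ENNReal.ofReal_mul hr, ENNReal.ofReal_natCast]
    _ ≤ ∫⁻ t in Set.Ici 0, (#(vertexBoundary G (superlevelSet y t)) : ℝ≥0∞) :=
        setLIntegral_mono' measurableSet_Ici fun t ht => by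
          rw [← ENNReal.ofReal_natCast]
          exact ENNReal.ofReal_le_ofReal (h t ht)
    _ ≤ ∫⁻ t, (#(vertexBoundary G (superlevelSet y t)) : ℝ≥0∞) :=
        setLIntegral_le_lintegral _ _
    _ ≤ ENNReal.ofReal (∑ i, maxNeighborGap G y i) :=
        lintegral_card_vertexBoundary_superlevelSet_le G y

theorem stmt_6 (n : ℕ) (G : SimpleGraph (Fin n)) [DecidableRel G.Adj]
    (y : Fin n → ℝ) (hy : ∀ i, 0 ≤ y i) (hpos : 0 < ∑ i, y i) :
    ∃ S : Finset (Fin n), S.Nonempty ∧ (∀ i ∈ S, 0 < y i) ∧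
      ((Finset.univ.filter fun w => w ∉ S ∧ ∃ u ∈ S, G.Adj u w).card : ℝ) / S.card
        ≤ (∑ i, supOrZero (G.neighborFinset i) fun j => |y j - y i|) / ∑ i, y i := by
  let admissible : Finset (Finset (Fin n)) := {S | S.Nonempty ∧ ∀ i ∈ S, 0 < y i}
  obtain ⟨i₀, -, hi₀⟩ := exists_lt_of_sum_lt (f := fun _ => (0 : ℝ)) (by simpa using hpos)
  obtain ⟨S, hS, hmin⟩ := exists_min_image admissible (fun S => (#(vertexBoundary G S) : ℝ) / #S)
    ⟨{i₀}, by simpa [admissible] using hi₀⟩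
  obtain ⟨hSne, hSpos⟩ := (mem_filter.1 hS).2
  refine ⟨S, hSne, hSpos, ?_⟩
  -- the statement decides `∃ u ∈ S, _` by a different instance, so this is not `rfl`
  have hboundary : (univ.filter fun w => w ∉ S ∧ ∃ u ∈ S, G.Adj u w) = vertexBoundary G S := by
    ext
    simp only [vertexBoundary, mem_filter]
  rw [hboundary]
  change _ ≤ (∑ i, maxNeighborGap G y i) / _
  rw [le_div_iff₀ hpos]
  refine mul_sum_le_sum_maxNeighborGap G y hy (by positivity) fun t ht => ?_
  rcases (superlevelSet y t).eq_empty_or_nonempty with hempty | hne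
  · simp [hempty]
  · have hadm : superlevelSet y t ∈ admissible := by
      refine mem_filter.2 ⟨mem_univ _, hne, fun i hi => ?_⟩
      exact ht.trans_lt (mem_filter.1 hi).2
    exact (le_div_iff₀ (by exact_mod_cast hne.card_pos)).1 (hmin _ hadm)
end

section
/- For any real x_i with ∑_i x_i² = 1 and nonnegative λ such that ∑_i max_{j∼i, j<i}(x_j − x_i)² ≤ λ, one has ∑_i max_{j∼i, j<i}(x_j² − x_i²) ≤ λ + 2√λ. -/
theorem stmt_8 (n : ℕ) (G : SimpleGraph (Fin n)) [DecidableRel G.Adj]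
    (x : Fin n → ℝ) (hx : ∑ i, x i ^ 2 = 1) (lam : ℝ) (hlam : 0 ≤ lam)
    (hsum : ∑ i, supOrZero ((G.neighborFinset i).filter fun j => j < i)
        (fun j => (x j - x i) ^ 2) ≤ lam) :
    ∑ i, supOrZero ((G.neighborFinset i).filter fun j => j < i)
        (fun j => x j ^ 2 - x i ^ 2)
      ≤ lam + 2 * Real.sqrt lam := by
  set s : Fin n → Finset (Fin n) :=
    fun i => (G.neighborFinset i).filter fun j => j < i with hsdef
  set A : Fin n → ℝ := fun i => supOrZero (s i) (fun j => (x j - x i) ^ 2) with hAdef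
  have hA0 : ∀ i, 0 ≤ A i := by
    intro i
    simp only [hAdef, supOrZero]
    split
    · next h =>
      obtain ⟨j, hj⟩ := h
      exact le_trans (sq_nonneg _) (Finset.le_sup' (fun j => (x j - x i) ^ 2) hj)
    · exact le_refl 0
  have key : ∀ i, supOrZero (s i) (fun j => x j ^ 2 - x i ^ 2)
      ≤ A i + 2 * |x i| * Real.sqrt (A i) := by
    intro i
    have hrhs0 : 0 ≤ A i + 2 * |x i| * Real.sqrt (A i) := by
      have := Real.sqrt_nonneg (A i)
      have := abs_nonneg (x i)
      nlinarith [hA0 i]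
    unfold supOrZero
    split
    · next h =>
      have hAi : A i = (s i).sup' h (fun j => (x j - x i) ^ 2) := by
        simp only [hAdef, supOrZero, dif_pos h]
      apply Finset.sup'_le
      intro j hj
      have h1 : (x j - x i) ^ 2 ≤ A i := by
        rw [hAi]; exact Finset.le_sup' (fun j => (x j - x i) ^ 2) hj
      have habs : |x j - x i| ≤ Real.sqrt (A i) := by
        rw [← Real.sqrt_sq_eq_abs]
        exact Real.sqrt_le_sqrt h1
      have h2 : x i * (x j - x i) ≤ |x i| * |x j - x i| := by
        calc x i * (x j - x i) ≤ |x i * (x j - x i)| := le_abs_self _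
        _ = |x i| * |x j - x i| := abs_mul _ _
      have h3 : |x i| * |x j - x i| ≤ |x i| * Real.sqrt (A i) :=
        mul_le_mul_of_nonneg_left habs (abs_nonneg _)
      nlinarith [h1, h2, h3]
    · exact hrhs0
  have hsumA : ∑ i, A i ≤ lam := hsum
  have step1 : ∑ i, supOrZero (s i) (fun j => x j ^ 2 - x i ^ 2)
      ≤ ∑ i, (A i + 2 * |x i| * Real.sqrt (A i)) :=
    Finset.sum_le_sum fun i _ => key i
  have cs : (∑ i, |x i| * Real.sqrt (A i)) ^ 2
      ≤ (∑ i, x i ^ 2) * ∑ i, A i := by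
    have h := Finset.sum_mul_sq_le_sq_mul_sq Finset.univ (fun i => |x i|)
      (fun i => Real.sqrt (A i))
    simpa [sq_abs, Real.sq_sqrt, hA0] using h
  have hsq : ∑ i, |x i| * Real.sqrt (A i) ≤ Real.sqrt lam := by
    have h0 : 0 ≤ ∑ i, |x i| * Real.sqrt (A i) :=
      Finset.sum_nonneg fun i _ => mul_nonneg (abs_nonneg _) (Real.sqrt_nonneg _)
    have h1 : (∑ i, |x i| * Real.sqrt (A i)) ^ 2 ≤ lam := by
      calc (∑ i, |x i| * Real.sqrt (A i)) ^ 2 ≤ (∑ i, x i ^ 2) * ∑ i, A i := cs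
      _ = ∑ i, A i := by rw [hx, one_mul]
      _ ≤ lam := hsumA
    have := Real.sqrt_le_sqrt h1
    rwa [Real.sqrt_sq h0] at this
  calc ∑ i, supOrZero (s i) (fun j => x j ^ 2 - x i ^ 2)
      ≤ ∑ i, (A i + 2 * |x i| * Real.sqrt (A i)) := step1
    _ = (∑ i, A i) + 2 * ∑ i, |x i| * Real.sqrt (A i) := by
        rw [Finset.sum_add_distrib, Finset.mul_sum]
        congr 1
        exact Finset.sum_congr rfl fun i _ => by ring
    _ ≤ lam + 2 * Real.sqrt lam := by
        have : 2 * ∑ i, |x i| * Real.sqrt (A i) ≤ 2 * Real.sqrt lam := by linarith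
        linarith
end
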